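/- Let Q be a finite quiver with involution σ and duality structure (s, τ), let θ be a σ-compatible stability, and let M be a self-dual representation of Q with σ-Harder–Narasimhan filtration 0 = U_0 ⊂ U_1 ⊂ ⋯ ⊂ U_r ⊂ M. Then the filtration 0 = U_0 ⊂ U_1 ⊂ ⋯ ⊂ U_r ⊆ U_r^⊥ ⊂ U_{r−1}^⊥ ⊂ ⋯ ⊂ U_0^⊥ = M, with the repeated term deleted when U_r = U_r^⊥ (i.e. when M//U_r = 0), is the Harder–Narasimhan filtration of M regarded as an ordinary representation; in particular each subquotient U_{k−1}^⊥/U_k^⊥ (k = 1,…,r) is semistable of slope −μ(U_k/U_{k−1}), and U_r^⊥/U_r is semistable of slope 0 if nonzero. -/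

import Mathlib

open scoped BigOperators

/-- A finite quiver. -/
structure FinQuiver where
  V : Type
  A : Type
  [fintypeV : Fintype V]
  [fintypeA : Fintype A]
  [decEqV : DecidableEq V]
  [decEqA : DecidableEq A]
  src : A → V
  tgt : A → V

attribute [instance] FinQuiver.fintypeV FinQuiver.fintypeA FinQuiver.decEqV FinQuiver.decEqA

/-- A finite-dimensional complex representation of a quiver. -/
structure QRep (Q : FinQuiver) where
  carrier : Q.V → Type
  [acg : ∀ i, AddCommGroup (carrier i)]
  [mod : ∀ i, Module ℂ (carrier i)]
  [fd : ∀ i, FiniteDimensional ℂ (carrier i)]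
  map : ∀ a : Q.A, carrier (Q.src a) →ₗ[ℂ] carrier (Q.tgt a)

attribute [instance] QRep.acg QRep.mod QRep.fd

namespace QRep

variable {Q : FinQuiver}

/-- A family of subspaces of a representation. -/
abbrev SubFam (X : QRep Q) := ∀ i, Submodule ℂ (X.carrier i)

/-- The family of subspaces is a subrepresentation: it is stable under all structure maps. -/
def IsSubRep (X : QRep Q) (V : X.SubFam) : Prop :=
  ∀ a : Q.A, ∀ x ∈ V (Q.src a), X.map a x ∈ V (Q.tgt a)

/-- Dimension vector (with values in `ℤ`) of a family of subspaces. -/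
noncomputable def dimZ {X : QRep Q} (V : X.SubFam) : Q.V → ℤ :=
  fun i => (Module.finrank ℂ (V i) : ℤ)

/-- Dimension vector (with values in `ℤ`) of a representation. -/
noncomputable def dimVecZ (X : QRep Q) : Q.V → ℤ :=
  fun i => (Module.finrank ℂ (X.carrier i) : ℤ)

/-- The slope of a dimension vector with respect to a stability `θ`. -/
noncomputable def slope (θ : (Q.V → ℤ) →+ ℤ) (d : Q.V → ℤ) : ℚ :=
  (θ d : ℚ) / ((∑ i, d i : ℤ) : ℚ)

/-- A representation is semistable when every nonzero subrepresentation has slope at most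
the slope of the representation. -/
def Semistable (θ : (Q.V → ℤ) →+ ℤ) (X : QRep Q) : Prop :=
  ∀ V : X.SubFam, X.IsSubRep V → V ≠ ⊥ → slope θ (dimZ V) ≤ slope θ X.dimVecZ

/-- Cast along an equality of vertices. -/
def castEquiv (X : QRep Q) {i j : Q.V} (h : i = j) : X.carrier i ≃ₗ[ℂ] X.carrier j := by
  subst h; exact LinearEquiv.refl ℂ _

end QRep

/-- An involution of a quiver. -/
structure QInv (Q : FinQuiver) where
  onV : Q.V → Q.V
  onA : Q.A → Q.A
  invV : ∀ i, onV (onV i) = i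
  invA : ∀ a, onA (onA a) = a
  src_onA : ∀ a, Q.src (onA a) = onV (Q.tgt a)
  tgt_onA : ∀ a, Q.tgt (onA a) = onV (Q.src a)
  fix_onA : ∀ a, Q.tgt a = onV (Q.src a) → onA a = a

/-- A duality structure on a quiver with involution. -/
structure Duality (Q : FinQuiver) (σ : QInv Q) where
  s : Q.V → ℤ
  τ : Q.A → ℤ
  s_pm : ∀ i, s i = 1 ∨ s i = -1
  τ_pm : ∀ a, τ a = 1 ∨ τ a = -1
  s_inv : ∀ i, s (σ.onV i) = s i
  ττ : ∀ a, τ a * τ (σ.onA a) = s (Q.src a) * s (Q.tgt a)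

namespace QRep

variable {Q : FinQuiver}

/-- A stability is σ-compatible if `θ ∘ σ = -θ`. -/
def SigmaCompatible (σ : QInv Q) (θ : (Q.V → ℤ) →+ ℤ) : Prop :=
  ∀ d : Q.V → ℤ, θ (fun i => d (σ.onV i)) = - θ d

/-- The dual representation `S(U)`, with `S(U)_i = (U_{σ(i)})^*` and
`S(u)_α = τ_α ⬝ (u_{σ(α)})^∨`. -/
noncomputable def dualRep (σ : QInv Q) (D : Duality Q σ) (X : QRep Q) : QRep Q where
  carrier := fun i => Module.Dual ℂ (X.carrier (σ.onV i))
  map := fun a => (D.τ a : ℂ) •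
    (((X.castEquiv (σ.src_onA a)).dualMap.symm.toLinearMap).comp
      (((X.map (σ.onA a)).dualMap).comp
        ((X.castEquiv (σ.tgt_onA a)).dualMap.toLinearMap)))

end QRep

namespace QRep

variable {Q : FinQuiver}

/-- Bilinear forms on the total space `⊕ᵢ Xᵢ` of a representation. -/
abbrev Bilin (X : QRep Q) := (∀ i, X.carrier i) →ₗ[ℂ] (∀ i, X.carrier i) →ₗ[ℂ] ℂ

/-- Nondegeneracy of a bilinear form. -/
def Nondeg (X : QRep Q) (B : X.Bilin) : Prop := ∀ x, (∀ y, B x y = 0) → x = 0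

/-- Condition (i) for a self-dual representation: `M_i` and `M_j` are orthogonal
unless `i = σ(j)` (equivalently `j = σ(i)`). -/
def sdOrthBlocks (σ : QInv Q) (X : QRep Q) (B : X.Bilin) : Prop :=
  ∀ i j, j ≠ σ.onV i → ∀ (x : X.carrier i) (y : X.carrier j),
    B (Pi.single i x) (Pi.single j y) = 0

/-- Condition (ii) for a self-dual representation: `⟨x, x'⟩ = s_i ⟨x', x⟩` on
`M_i + M_{σ(i)}`. -/
def sdSymm (σ : QInv Q) (D : Duality Q σ) (X : QRep Q) (B : X.Bilin) : Prop :=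
  ∀ i (x : X.carrier i) (y : X.carrier (σ.onV i)),
    B (Pi.single i x) (Pi.single (σ.onV i) y)
      = (D.s i : ℂ) * B (Pi.single (σ.onV i) y) (Pi.single i x)

/-- Condition (iii) for a self-dual representation: `⟨m_α x, x'⟩ = τ_α ⟨x, m_{σ(α)} x'⟩`. -/
def sdArrow (σ : QInv Q) (D : Duality Q σ) (X : QRep Q) (B : X.Bilin) : Prop :=
  ∀ (a : Q.A) (x : X.carrier (Q.src a)) (y : X.carrier (σ.onV (Q.tgt a))),
    B (Pi.single (Q.tgt a) (X.map a x)) (Pi.single (σ.onV (Q.tgt a)) y)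
      = (D.τ a : ℂ) * B (Pi.single (Q.src a) x)
          (Pi.single (Q.tgt (σ.onA a)) (X.map (σ.onA a) (X.castEquiv (σ.src_onA a).symm y)))

/-- The bilinear form `B` makes `X` a self-dual representation. -/
def IsSelfDualForm (σ : QInv Q) (D : Duality Q σ) (X : QRep Q) (B : X.Bilin) : Prop :=
  Nondeg X B ∧ sdOrthBlocks σ X B ∧ sdSymm σ D X B ∧ sdArrow σ D X B

/-- The orthogonal `U^⊥` of a family of subspaces:
`U^⊥_i = {m ∈ M_i : ⟨m, x⟩ = 0 for all x ∈ U_{σ(i)}}`. -/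
noncomputable def orthFam (σ : QInv Q) (X : QRep Q) (B : X.Bilin) (U : X.SubFam) : X.SubFam :=
  fun i => ⨅ y : (U (σ.onV i)),
    LinearMap.ker ((B.comp (LinearMap.single ℂ X.carrier i)).flip
      (Pi.single (σ.onV i) (y : X.carrier (σ.onV i))))

/-- A family of subspaces is isotropic if `U ≤ U^⊥`. -/
def IsotropicFam (σ : QInv Q) (X : QRep Q) (B : X.Bilin) (U : X.SubFam) : Prop :=
  U ≤ orthFam σ X B U

/-- σ-semistability of a self-dual representation: every nonzero isotropic
subrepresentation has slope at most `0`. -/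
def SigmaSemistable (σ : QInv Q) (θ : (Q.V → ℤ) →+ ℤ) (X : QRep Q) (B : X.Bilin) : Prop :=
  ∀ U : X.SubFam, X.IsSubRep U → IsotropicFam σ X B U → U ≠ ⊥ → slope θ (dimZ U) ≤ 0

end QRep

namespace QRep

variable {Q : FinQuiver}

/-- Semistability of the subquotient `W/V` of a representation `X` (for `V ≤ W`):
every subrepresentation `Y` with `V ≤ Y ≤ W`, `Y ≠ V`, satisfies
`μ(Y/V) ≤ μ(W/V)`.  (Subrepresentations of `W/V` correspond to such `Y`.) -/
def SubquotSemistable (θ : (Q.V → ℤ) →+ ℤ) (X : QRep Q) (V W : X.SubFam) : Prop :=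
  ∀ Y : X.SubFam, X.IsSubRep Y → V ≤ Y → Y ≤ W → Y ≠ V →
    slope θ (dimZ Y - dimZ V) ≤ slope θ (dimZ W - dimZ V)

/-- σ-semistability of the self-dual subquotient `M ∕∕ V = V^⊥/V` of a self-dual
representation `(X, B)`: every isotropic subrepresentation `W` with `V ≤ W ≤ V^⊥`,
`W ≠ V` (these correspond to the nonzero isotropic subrepresentations of `M ∕∕ V`)
satisfies `μ(W/V) ≤ 0`. -/
def SigmaSemistableQuot (σ : QInv Q) (θ : (Q.V → ℤ) →+ ℤ) (X : QRep Q) (B : X.Bilin)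
    (V : X.SubFam) : Prop :=
  ∀ W : X.SubFam, X.IsSubRep W → V ≤ W → W ≤ orthFam σ X B V →
    IsotropicFam σ X B W → W ≠ V → slope θ (dimZ W - dimZ V) ≤ 0

/-- The slope of the `k`-th subquotient of a filtration. -/
noncomputable def stepSlope (θ : (Q.V → ℤ) →+ ℤ) {X : QRep Q} (r : ℕ)
    (U : Fin (r+1) → X.SubFam) (k : Fin r) : ℚ :=
  slope θ (dimZ (U k.succ) - dimZ (U k.castSucc))

/-- `U` is the σ-Harder–Narasimhan filtration `0 = U_0 ⊂ U_1 ⊂ ⋯ ⊂ U_r ⊂ M` of the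
self-dual representation `(X, B)`: an isotropic filtration with semistable subquotients
of strictly decreasing positive slopes such that `M ∕∕ U_r` is σ-semistable. -/
def IsSigmaHN (σ : QInv Q) (θ : (Q.V → ℤ) →+ ℤ) (X : QRep Q) (B : X.Bilin)
    (r : ℕ) (U : Fin (r+1) → X.SubFam) : Prop :=
  (∀ k, X.IsSubRep (U k)) ∧
  (U 0 = ⊥) ∧
  (∀ k : Fin r, U k.castSucc ≤ U k.succ) ∧
  (∀ k : Fin r, U k.castSucc ≠ U k.succ) ∧
  (∀ k, IsotropicFam σ X B (U k)) ∧
  (∀ k : Fin r, SubquotSemistable θ X (U k.castSucc) (U k.succ)) ∧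
  (∀ k l : Fin r, k < l → stepSlope θ r U l < stepSlope θ r U k) ∧
  (∀ k : Fin r, 0 < stepSlope θ r U k) ∧
  SigmaSemistableQuot σ θ X B (U (Fin.last r))

end QRep

/-!
Taking orthogonals is an inclusion-reversing involution on the lattice of
subrepresentations of `M`. Since `dim U^⊥_i = dim M_i - dim U_{σ i}` and `θ ∘ σ = -θ`, it
turns a subquotient `W/V` into the subquotient `V^⊥/W^⊥` of opposite slope, and by the
see-saw property of slopes it carries semistable subquotients to semistable ones. This
mirrors each `U_k/U_{k-1}` by `U_{k-1}^⊥/U_k^⊥`. The middle piece `U_r^⊥/U_r` has slope `0`;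
a subrepresentation `Y` between `U_r` and `U_r^⊥` may be replaced by the isotropic
`Y ∩ Y^⊥` without changing `θ(dim Y)`, and then σ-semistability of `M//U_r` applies.
-/

namespace QRep

open Module

variable {Q : FinQuiver}

section Slope

variable (θ : (Q.V → ℤ) →+ ℤ)

lemma slope_eq_zero {d : Q.V → ℤ} (h : θ d = 0) : slope θ d = 0 := by
  simp [slope, h]

lemma slope_nonpos_iff {d : Q.V → ℤ} (hd : 0 < ∑ i, d i) :
    slope θ d ≤ 0 ↔ θ d ≤ 0 := by
  have hd' : (0 : ℚ) < ((∑ i, d i : ℤ) : ℚ) := by exact_mod_cast hd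
  rw [slope, div_le_iff₀ hd', zero_mul]
  exact_mod_cast Iff.rfl

lemma slope_le_slope_add_iff {d e : Q.V → ℤ} (hd : 0 < ∑ i, d i) (he : 0 < ∑ i, e i) :
    slope θ d ≤ slope θ (d + e) ↔ slope θ (d + e) ≤ slope θ e := by
  have hd' : (0 : ℚ) < ((∑ i, d i : ℤ) : ℚ) := by exact_mod_cast hd
  have he' : (0 : ℚ) < ((∑ i, e i : ℤ) : ℚ) := by exact_mod_cast he
  simp only [slope, map_add, Pi.add_apply, Finset.sum_add_distrib, Int.cast_add]
  rw [div_le_div_iff₀ hd' (by positivity), div_le_div_iff₀ (by positivity) he']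
  constructor <;> intro h <;> nlinarith

lemma slope_comp_onV (σ : QInv Q) (hθ : SigmaCompatible σ θ) (d : Q.V → ℤ) :
    slope θ (fun i => d (σ.onV i)) = -slope θ d := by
  have hsum : ∑ i, d (σ.onV i) = ∑ i, d i :=
    Equiv.sum_comp (Function.Involutive.toPerm σ.onV σ.invV) d
  rw [slope, slope, hθ d, hsum, Int.cast_neg, neg_div]

end Slope

lemma sum_dimZ_sub_pos {X : QRep Q} {V Y : X.SubFam} (h : V < Y) :
    0 < ∑ i, (dimZ Y - dimZ V) i := by
  have hle : ∀ i, dimZ V i ≤ dimZ Y i := fun i => by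
    simp only [dimZ]; exact_mod_cast Submodule.finrank_mono (h.le i)
  obtain ⟨i, hi⟩ := Pi.lt_def.1 h |>.2
  have hlt : dimZ V i < dimZ Y i := by
    simp only [dimZ]; exact_mod_cast Submodule.finrank_lt_finrank_of_lt hi
  simp only [Pi.sub_apply]
  exact Finset.sum_pos' (fun j _ => sub_nonneg.2 (hle j)) ⟨i, Finset.mem_univ i, sub_pos.2 hlt⟩

lemma IsSubRep.inf {X : QRep Q} {Y Z : X.SubFam} (hY : X.IsSubRep Y) (hZ : X.IsSubRep Z) :
    X.IsSubRep (Y ⊓ Z) :=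
  fun a x hx => ⟨hY a x hx.1, hZ a x hx.2⟩

lemma castEquiv_mem {X : QRep Q} (V : X.SubFam) {i j : Q.V} (h : i = j) {x : X.carrier i}
    (hx : x ∈ V i) : X.castEquiv h x ∈ V j := by
  subst h; exact hx

lemma apply_single_castEquiv {X : QRep Q} (B : X.Bilin) {i j : Q.V} (h : i = j)
    (w : ∀ k, X.carrier k) (z : X.carrier i) :
    B w (Pi.single j (X.castEquiv h z)) = B w (Pi.single i z) := by
  subst h; rfl

section Orthogonal

variable (σ : QInv Q) (M : QRep Q) (B : M.Bilin)

lemma mem_orthFam {U : M.SubFam} {i : Q.V} {m : M.carrier i} :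
    m ∈ orthFam σ M B U i ↔
      ∀ y ∈ U (σ.onV i), B (Pi.single i m) (Pi.single (σ.onV i) y) = 0 := by
  simp only [orthFam, Submodule.mem_iInf, LinearMap.mem_ker, LinearMap.flip_apply,
    LinearMap.comp_apply, LinearMap.coe_single, Subtype.forall]

lemma orthFam_antitone : Antitone (orthFam σ M B) := fun _ _ h _ _ hm =>
  (mem_orthFam σ M B).2 fun y hy => (mem_orthFam σ M B).1 hm y (h _ hy)

lemma orthFam_bot : orthFam σ M B ⊥ = ⊤ := by
  funext i
  refine eq_top_iff.2 fun m _ => (mem_orthFam σ M B).2 fun y hy => ?_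
  rw [(Submodule.mem_bot ℂ).1 hy, Pi.single_zero, map_zero]

lemma orthFam_sup (V W : M.SubFam) :
    orthFam σ M B (V ⊔ W) = orthFam σ M B V ⊓ orthFam σ M B W := by
  refine le_antisymm (le_inf ((orthFam_antitone σ M B) le_sup_left)
    ((orthFam_antitone σ M B) le_sup_right)) fun i m ⟨hV, hW⟩ => ?_
  refine (mem_orthFam σ M B).2 fun y hy => ?_
  obtain ⟨u, hu, v, hv, rfl⟩ := Submodule.mem_sup.1 hy
  rw [Pi.single_add, map_add, (mem_orthFam σ M B).1 hV u hu, (mem_orthFam σ M B).1 hW v hv,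
    add_zero]

lemma le_orthFam_orthFam {D : Duality Q σ} (hsymm : sdSymm σ D M B) (V : M.SubFam) :
    V ≤ orthFam σ M B (orthFam σ M B V) := by
  refine fun i x hx => (mem_orthFam σ M B).2 fun y hy => ?_
  have h0 := (mem_orthFam σ M B).1 hy _ (castEquiv_mem V (σ.invV i).symm hx)
  rw [apply_single_castEquiv B (σ.invV i).symm] at h0
  rw [hsymm i x y, h0, mul_zero]

lemma IsSubRep.orthFam {D : Duality Q σ} (harrow : sdArrow σ D M B) {V : M.SubFam}
    (hV : M.IsSubRep V) : M.IsSubRep (orthFam σ M B V) := by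
  refine fun a x hx => (mem_orthFam σ M B).2 fun y hy => ?_
  have hy' : M.castEquiv (σ.tgt_onA a) (M.map (σ.onA a) (M.castEquiv (σ.src_onA a).symm y))
      ∈ V (σ.onV (Q.src a)) :=
    castEquiv_mem V _ (hV _ _ (castEquiv_mem V (σ.src_onA a).symm hy))
  have h0 := (mem_orthFam σ M B).1 hx _ hy'
  rw [apply_single_castEquiv B (σ.tgt_onA a)] at h0
  rw [harrow a x y, h0, mul_zero]

noncomputable def pairing (i : Q.V) : M.carrier i →ₗ[ℂ] Dual ℂ (M.carrier (σ.onV i)) :=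
  (B.comp (LinearMap.single ℂ M.carrier i)).compl₂ (LinearMap.single ℂ M.carrier (σ.onV i))

lemma orthFam_eq_comap_pairing (U : M.SubFam) (i : Q.V) :
    orthFam σ M B U i = (U (σ.onV i)).dualAnnihilator.comap (pairing σ M B i) := by
  ext m
  rw [mem_orthFam, Submodule.mem_comap, Submodule.mem_dualAnnihilator]
  rfl

variable {σ M B}

lemma pairing_injective (hnd : Nondeg M B) (horth : sdOrthBlocks σ M B) (i : Q.V) :
    Function.Injective (pairing σ M B i) := by
  refine (injective_iff_map_eq_zero _).2 fun m hm => ?_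
  suffices Pi.single i m = (0 : ∀ j, M.carrier j) by simpa using congrFun this i
  refine hnd _ fun y => ?_
  -- only the `σ i`-component of `y` pairs with `M_i`
  rw [← Finset.univ_sum_single y, map_sum, Finset.sum_eq_single (σ.onV i)
    (fun j _ hj => horth i j hj m (y j)) (by simp)]
  exact LinearMap.congr_fun hm (y (σ.onV i))

lemma finrank_carrier_onV (hnd : Nondeg M B) (horth : sdOrthBlocks σ M B) (i : Q.V) :
    finrank ℂ (M.carrier (σ.onV i)) = finrank ℂ (M.carrier i) := by
  have hle : ∀ j, finrank ℂ (M.carrier j) ≤ finrank ℂ (M.carrier (σ.onV j)) := fun j => by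
    simpa only [Subspace.dual_finrank_eq] using
      LinearMap.finrank_le_finrank_of_injective (pairing_injective hnd horth j)
  have hσ := hle (σ.onV i)
  rw [σ.invV] at hσ
  exact le_antisymm hσ (hle i)

lemma finrank_orthFam_add (hnd : Nondeg M B) (horth : sdOrthBlocks σ M B) (U : M.SubFam)
    (i : Q.V) :
    finrank ℂ (orthFam σ M B U i) + finrank ℂ (U (σ.onV i)) = finrank ℂ (M.carrier i) := by
  let e := LinearMap.linearEquivOfInjective (pairing σ M B i)
    (pairing_injective hnd horth i)
    (by rw [Subspace.dual_finrank_eq, finrank_carrier_onV hnd horth])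
  have he : orthFam σ M B U i = (U (σ.onV i)).dualAnnihilator.comap (e : _ →ₗ[ℂ] _) :=
    orthFam_eq_comap_pairing σ M B U i
  rw [he, Submodule.comap_equiv_eq_map_symm, LinearEquiv.finrank_map_eq, add_comm,
    Subspace.finrank_add_finrank_dualAnnihilator_eq, finrank_carrier_onV hnd horth]

variable {D : Duality Q σ}

lemma orthFam_orthFam (hB : IsSelfDualForm σ D M B) (V : M.SubFam) :
    orthFam σ M B (orthFam σ M B V) = V := by
  funext i
  refine (Submodule.eq_of_le_of_finrank_le (le_orthFam_orthFam σ M B hB.2.2.1 V i) ?_).symm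
  have h1 := finrank_orthFam_add hB.1 hB.2.1 (orthFam σ M B V) i
  have h2 := finrank_orthFam_add hB.1 hB.2.1 V (σ.onV i)
  rw [σ.invV, finrank_carrier_onV hB.1 hB.2.1] at h2
  omega

lemma orthFam_injective (hB : IsSelfDualForm σ D M B) : Function.Injective (orthFam σ M B) :=
  Function.LeftInverse.injective (orthFam_orthFam hB)

end Orthogonal

section OrthogonalSlope

variable {σ : QInv Q} {D : Duality Q σ} {M : QRep Q} {B : M.Bilin}
  {θ : (Q.V → ℤ) →+ ℤ}

lemma dimZ_orthFam (hnd : Nondeg M B) (horth : sdOrthBlocks σ M B) (V : M.SubFam) :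
    dimZ (orthFam σ M B V) = M.dimVecZ - fun i => dimZ V (σ.onV i) := by
  funext i
  have := finrank_orthFam_add hnd horth V i
  simp only [dimZ, dimVecZ, Pi.sub_apply]
  omega

lemma theta_dimZ_orthFam (hnd : Nondeg M B) (horth : sdOrthBlocks σ M B)
    (hθ : SigmaCompatible σ θ) (V : M.SubFam) : θ (dimZ (orthFam σ M B V)) = θ (dimZ V) := by
  have hM : θ M.dimVecZ = 0 := by
    have hσM : (fun i => M.dimVecZ (σ.onV i)) = M.dimVecZ := funext fun i => by
      simp only [dimVecZ, finrank_carrier_onV hnd horth]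
    have := hθ M.dimVecZ
    rw [hσM] at this
    omega
  rw [dimZ_orthFam hnd horth, map_sub, hM, hθ, zero_sub, neg_neg]

lemma slope_dimZ_sub_dimZ_orthFam (hnd : Nondeg M B) (horth : sdOrthBlocks σ M B)
    (hθ : SigmaCompatible σ θ) (Y V : M.SubFam) :
    slope θ (dimZ Y - dimZ (orthFam σ M B V)) = -slope θ (dimZ V - dimZ (orthFam σ M B Y)) := by
  rw [← slope_comp_onV θ σ hθ]
  congr 1
  funext i
  have := congrFun (dimZ_orthFam hnd horth Y) (σ.onV i)
  simp only [Pi.sub_apply, dimVecZ, σ.invV, finrank_carrier_onV hnd horth] at this ⊢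
  rw [dimZ_orthFam hnd horth, this]
  simp only [Pi.sub_apply, dimVecZ]
  ring

lemma slope_dimZ_orthFam_sub_dimZ_orthFam (hB : IsSelfDualForm σ D M B)
    (hθ : SigmaCompatible σ θ) (V W : M.SubFam) :
    slope θ (dimZ (orthFam σ M B V) - dimZ (orthFam σ M B W)) = -slope θ (dimZ W - dimZ V) := by
  rw [slope_dimZ_sub_dimZ_orthFam hB.1 hB.2.1 hθ, orthFam_orthFam hB]

/-- `(Y ⊔ Y^⊥)^⊥ = Y ⊓ Y^⊥`, so both have the same `θ`; then use the dimension formula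
for `⊔` and `⊓`. -/
lemma theta_dimZ_inf_orthFam (hB : IsSelfDualForm σ D M B) (hθ : SigmaCompatible σ θ)
    (Y : M.SubFam) : θ (dimZ (Y ⊓ orthFam σ M B Y)) = θ (dimZ Y) := by
  have hsup : orthFam σ M B (Y ⊔ orthFam σ M B Y) = Y ⊓ orthFam σ M B Y := by
    rw [orthFam_sup, orthFam_orthFam hB, inf_comm]
  have hdim : dimZ (Y ⊔ orthFam σ M B Y) + dimZ (Y ⊓ orthFam σ M B Y)
      = dimZ Y + dimZ (orthFam σ M B Y) := funext fun i => by
    simp only [Pi.add_apply, dimZ, Pi.inf_apply, Pi.sup_apply]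
    exact_mod_cast Submodule.finrank_sup_add_finrank_inf_eq (Y i) (orthFam σ M B Y i)
  have hθsup : θ (dimZ (Y ⊓ orthFam σ M B Y)) = θ (dimZ (Y ⊔ orthFam σ M B Y)) := by
    rw [← hsup, theta_dimZ_orthFam hB.1 hB.2.1 hθ]
  have := congrArg θ hdim
  rw [map_add, map_add, theta_dimZ_orthFam hB.1 hB.2.1 hθ Y] at this
  omega

lemma SubquotSemistable.orthFam (hB : IsSelfDualForm σ D M B) (hθ : SigmaCompatible σ θ)
    {V W : M.SubFam} (hss : SubquotSemistable θ M V W) :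
    SubquotSemistable θ M (orthFam σ M B W) (orthFam σ M B V) := by
  intro Y hY hWY hYV hYW
  rw [slope_dimZ_sub_dimZ_orthFam hB.1 hB.2.1 hθ,
    slope_dimZ_orthFam_sub_dimZ_orthFam hB hθ, neg_le_neg_iff]
  set Z := QRep.orthFam σ M B Y
  have hVZ : V ≤ Z := orthFam_orthFam hB V ▸ orthFam_antitone σ M B hYV
  have hZW : Z ≤ W := orthFam_orthFam hB W ▸ orthFam_antitone σ M B hWY
  have hZW' : Z ≠ W := fun h => hYW ((orthFam_orthFam hB Y).symm.trans (congrArg _ h))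
  rcases eq_or_ne Z V with hZV | hZV
  · rw [hZV]
  have hsplit : dimZ W - dimZ V = (dimZ Z - dimZ V) + (dimZ W - dimZ Z) := by abel
  have key := hss Z (IsSubRep.orthFam σ M B hB.2.2.2 hY) hVZ hZW hZV
  rw [hsplit] at key ⊢
  exact (slope_le_slope_add_iff θ (sum_dimZ_sub_pos (lt_of_le_of_ne hVZ (Ne.symm hZV)))
    (sum_dimZ_sub_pos (lt_of_le_of_ne hZW hZW'))).1 key

lemma slope_dimZ_orthFam_sub_dimZ_self (hnd : Nondeg M B) (horth : sdOrthBlocks σ M B)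
    (hθ : SigmaCompatible σ θ) (V : M.SubFam) :
    slope θ (dimZ (orthFam σ M B V) - dimZ V) = 0 :=
  slope_eq_zero θ (by rw [map_sub, theta_dimZ_orthFam hnd horth hθ, sub_self])

lemma SigmaSemistableQuot.subquotSemistable (hB : IsSelfDualForm σ D M B)
    (hθ : SigmaCompatible σ θ) {V : M.SubFam} (hσ : SigmaSemistableQuot σ θ M B V) :
    SubquotSemistable θ M V (orthFam σ M B V) := by
  intro Y hY hVY hYV hYne
  rw [slope_dimZ_orthFam_sub_dimZ_self hB.1 hB.2.1 hθ,
    slope_nonpos_iff θ (sum_dimZ_sub_pos (lt_of_le_of_ne hVY (Ne.symm hYne))), map_sub,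
    sub_nonpos, ← theta_dimZ_inf_orthFam hB hθ Y]
  set W := Y ⊓ QRep.orthFam σ M B Y
  have hVW : V ≤ W :=
    le_inf hVY ((le_orthFam_orthFam σ M B hB.2.2.1 V).trans (orthFam_antitone σ M B hYV))
  rcases eq_or_ne W V with hWV | hWV
  · rw [hWV]
  have hWiso : IsotropicFam σ M B W := inf_le_right.trans (orthFam_antitone σ M B inf_le_left)
  have key := hσ W (hY.inf (IsSubRep.orthFam σ M B hB.2.2.2 hY)) hVW (inf_le_left.trans hYV)
    hWiso hWV
  rw [slope_nonpos_iff θ (sum_dimZ_sub_pos (lt_of_le_of_ne hVW (Ne.symm hWV))), map_sub] at key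
  omega

end OrthogonalSlope

end QRep

/-- If `0 = U_0 ⊂ U_1 ⊂ ⋯ ⊂ U_r ⊂ M` is the σ-Harder–Narasimhan
filtration of a self-dual representation `M`, then the extended filtration
`0 = U_0 ⊂ ⋯ ⊂ U_r ⊆ U_r^⊥ ⊂ U_{r-1}^⊥ ⊂ ⋯ ⊂ U_0^⊥ = M` (with the repeated term
deleted when `U_r = U_r^⊥`) is the Harder–Narasimhan filtration of `M` as an ordinary
representation: the orthogonals `U_k^⊥` are subrepresentations, `U_0^⊥ = M`, the chain
is strictly decreasing, each subquotient `U_{k-1}^⊥/U_k^⊥` is semistable of slope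
`-μ(U_k/U_{k-1})`, and `U_r^⊥/U_r` is semistable of slope `0` if it is nonzero. -/
theorem sigmaHN_extends_to_HN (Q : FinQuiver) (σ : QInv Q) (D : Duality Q σ)
    (θ : (Q.V → ℤ) →+ ℤ) (hθ : QRep.SigmaCompatible σ θ)
    (M : QRep Q) (B : M.Bilin) (hB : QRep.IsSelfDualForm σ D M B)
    (r : ℕ) (U : Fin (r+1) → M.SubFam) (hHN : QRep.IsSigmaHN σ θ M B r U) :
    (∀ k, M.IsSubRep (QRep.orthFam σ M B (U k))) ∧
    (QRep.orthFam σ M B (U 0) = ⊤) ∧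
    (∀ k : Fin r, QRep.orthFam σ M B (U k.succ) ≤ QRep.orthFam σ M B (U k.castSucc)) ∧
    (∀ k : Fin r, QRep.orthFam σ M B (U k.succ) ≠ QRep.orthFam σ M B (U k.castSucc)) ∧
    (∀ k : Fin r,
      QRep.SubquotSemistable θ M (QRep.orthFam σ M B (U k.succ))
        (QRep.orthFam σ M B (U k.castSucc)) ∧
      QRep.slope θ (QRep.dimZ (QRep.orthFam σ M B (U k.castSucc))
          - QRep.dimZ (QRep.orthFam σ M B (U k.succ)))
        = - QRep.stepSlope θ r U k) ∧
    (U (Fin.last r) ≠ QRep.orthFam σ M B (U (Fin.last r)) →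
      QRep.SubquotSemistable θ M (U (Fin.last r)) (QRep.orthFam σ M B (U (Fin.last r))) ∧
      QRep.slope θ (QRep.dimZ (QRep.orthFam σ M B (U (Fin.last r)))
          - QRep.dimZ (U (Fin.last r))) = 0) := by
  obtain ⟨hsub, h0, hle, hne, -, hss, -, -, hσ⟩ := hHN
  refine ⟨fun k => (hsub k).orthFam σ M B hB.2.2.2, h0 ▸ QRep.orthFam_bot σ M B,
    fun k => QRep.orthFam_antitone σ M B (hle k),
    fun k h => hne k (QRep.orthFam_injective hB h).symm,
    fun k => ⟨(hss k).orthFam hB hθ, QRep.slope_dimZ_orthFam_sub_dimZ_orthFam hB hθ _ _⟩,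
    fun _ => ⟨hσ.subquotSemistable hB hθ,
      QRep.slope_dimZ_orthFam_sub_dimZ_self hB.1 hB.2.1 hθ _⟩⟩
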